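/- Every nonempty set S of traces admits a greatest lower bound under the prefix order: there exists a trace g such that g ≤ x for all x ∈ S, and every trace l satisfying l ≤ x for all x ∈ S satisfies l ≤ g. -/

import Mathlib

open Classical

universe u v w

/-- Operations `a` and `b` commute in state `q`. -/
def CommuteIn {Q : Type u} {O : Type v} {R : Type w}
    (σ : O → Q → R × Q) (a b : O) (q : Q) : Prop :=
  ∃ (ra rb : R) (q1 q2 q' : Q),
    σ a q = (ra, q1) ∧ σ b q1 = (rb, q') ∧ σ b q = (rb, q2) ∧ σ a q2 = (ra, q')

/-- Operations `a` and `b` conflict: they fail to commute in some state. -/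
def Conflict {Q : Type u} {O : Type v} {R : Type w}
    (σ : O → Q → R × Q) (a b : O) : Prop :=
  ∃ q : Q, ¬ CommuteIn σ a b q

/-- Position in `s` of the `i`-th (0-indexed) occurrence of `o`, if it exists. -/
noncomputable def occIdx {O : Type v} (s : List O) (o : O) (i : ℕ) : Option ℕ :=
  ((List.range s.length).filter (fun k => decide (s[k]? = some o)))[i]?

/-- The `i`-th occurrence of `a` precedes the `j`-th occurrence of `b` in `s`. -/
def Precedes {O : Type v} (s : List O) (a : O) (i : ℕ) (b : O) (j : ℕ) : Prop :=
  ∃ p q : ℕ, occIdx s a i = some p ∧ occIdx s b j = some q ∧ p < q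

/-- Schedule equivalence: same multiset of operations, and the relative order of
any two occurrences of conflicting operations is the same. -/
def ScheduleEquiv {Q : Type u} {O : Type v} {R : Type w}
    (σ : O → Q → R × Q) (s s' : List O) : Prop :=
  (↑s : Multiset O) = (↑s' : Multiset O) ∧
  ∀ (a b : O) (i j : ℕ), Conflict σ a b →
    (Precedes s a i b j ↔ Precedes s' a i b j)

/-- `~` is an equivalence relation (proved here to form the quotient). -/
def scheduleSetoid {Q : Type u} {O : Type v} {R : Type w}
    (σ : O → Q → R × Q) : Setoid (List O) :=
  ⟨ScheduleEquiv σ,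
    ⟨fun _ => ⟨rfl, fun _ _ _ _ _ => Iff.rfl⟩,
     fun h => ⟨h.1.symm, fun a b i j hc => (h.2 a b i j hc).symm⟩,
     fun h h' => ⟨h.1.trans h'.1, fun a b i j hc => (h.2 a b i j hc).trans (h'.2 a b i j hc)⟩⟩⟩

/-- Traces: equivalence classes of schedules. -/
def Trace {Q : Type u} {O : Type v} {R : Type w} (σ : O → Q → R × Q) :=
  Quotient (scheduleSetoid σ)

/-- Prefix order on traces. -/
def TraceLe {Q : Type u} {O : Type v} {R : Type w}
    (σ : O → Q → R × Q) (x y : Trace σ) : Prop :=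
  ∃ s u : List O, x = Quotient.mk (scheduleSetoid σ) s ∧
    y = Quotient.mk (scheduleSetoid σ) (s ++ u)

/-- Executing a schedule from state `q`. -/
def execTrace {Q : Type u} {O : Type v} {R : Type w}
    (σ : O → Q → R × Q) : List O → Q → List (R × Q)
  | [], _ => []
  | o :: s, q => (σ o q) :: execTrace σ s (σ o q).2

/-- Return value of the `i`-th (0-indexed) occurrence of `o` in `s`,
executed from the initial state `q0`. -/
noncomputable def retStar {Q : Type u} {O : Type v} {R : Type w}
    (σ : O → Q → R × Q) (q0 : Q) (o : O) (i : ℕ) (s : List O) : Option R :=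
  (occIdx s o i).bind fun k => ((execTrace σ s q0)[k]?).map Prod.fst

section Groundwork
variable {O : Type v}

theorem occList_cons (x : O) (s : List O) (o : O) :
    (List.range (x :: s).length).filter (fun k => decide ((x :: s)[k]? = some o)) =
      (if x = o then [0] else []) ++
        ((List.range s.length).filter (fun k => decide (s[k]? = some o))).map (· + 1) := by
  classical
  rw [List.length_cons, List.range_succ_eq_map, List.filter_cons]
  have h2 : List.filter (fun k => decide ((x :: s)[k]? = some o))
      (List.map Nat.succ (List.range s.length)) =
      List.map (· + 1) (List.filter (fun k => decide (s[k]? = some o)) (List.range s.length)) := by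
    rw [List.filter_map]
    have h3 : List.filter ((fun k => decide ((x :: s)[k]? = some o)) ∘ Nat.succ)
        (List.range s.length) =
        List.filter (fun k => decide (s[k]? = some o)) (List.range s.length) :=
      List.filter_congr (fun k _ => by simp [Function.comp])
    rw [h3]
  rw [h2]
  by_cases hx : x = o <;> simp [hx]

/-- The list of positions of occurrences of `o` in `s`. -/
noncomputable def occL (s : List O) (o : O) : List ℕ :=
  (List.range s.length).filter (fun k => decide (s[k]? = some o))

theorem occIdx_eq (s : List O) (o : O) (i : ℕ) : occIdx s o i = (occL s o)[i]? := rfl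

theorem occL_cons (x : O) (s : List O) (o : O) :
    occL (x :: s) o = (if x = o then [0] else []) ++ (occL s o).map (· + 1) :=
  occList_cons x s o

theorem occL_append (s u : List O) (o : O) :
    occL (s ++ u) o = occL s o ++ (occL u o).map (· + s.length) := by
  classical
  unfold occL
  rw [List.length_append, List.range_add, List.filter_append]
  congr 1
  · apply List.filter_congr
    intro k hk
    rw [List.mem_range] at hk
    simp [List.getElem?_append, hk]
  · rw [List.filter_map]
    have h3 : List.filter ((fun k => decide ((s ++ u)[k]? = some o)) ∘ (fun x => s.length + x))
        (List.range u.length) =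
        List.filter (fun k => decide (u[k]? = some o)) (List.range u.length) := by
      apply List.filter_congr
      intro k _
      have : (s ++ u)[s.length + k]? = u[k]? := by
        rw [List.getElem?_append_right (by omega)]
        congr 1
        omega
      simp [Function.comp, this]
    rw [h3]
    congr 1
    funext k
    omega

theorem occL_length (s : List O) (o : O) : (occL s o).length = s.count o := by
  classical
  induction s with
  | nil => rfl
  | cons x s ih =>
    rw [occL_cons, List.length_append, List.length_map, ih, List.count_cons]
    by_cases hx : x = o <;> simp [hx] <;> omega

theorem occL_sorted (s : List O) (o : O) : List.Pairwise (· < ·) (occL s o) :=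
  List.pairwise_lt_range.filter _

theorem occL_mem {s : List O} {o : O} {p : ℕ} (h : p ∈ occL s o) :
    p < s.length ∧ s[p]? = some o := by
  classical
  unfold occL at h
  rw [List.mem_filter, List.mem_range] at h
  refine ⟨h.1, by simpa using h.2⟩

theorem occIdx_isSome (s : List O) (o : O) (i : ℕ) :
    (occIdx s o i).isSome ↔ i < s.count o := by
  rw [occIdx_eq, ← occL_length s o]
  constructor
  · intro h
    by_contra hlt
    rw [List.getElem?_eq_none (by omega)] at h
    simp at h
  · intro h
    rw [List.getElem?_eq_getElem h]
    simp

theorem occIdx_eq_none (s : List O) (o : O) {i : ℕ} (h : s.count o ≤ i) :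
    occIdx s o i = none := by
  have := (occIdx_isSome s o i)
  cases hh : occIdx s o i with
  | none => rfl
  | some p => rw [hh] at this; simp at this; omega

theorem occIdx_lt_count {s : List O} {o : O} {i p : ℕ} (h : occIdx s o i = some p) :
    i < s.count o := by
  have := (occIdx_isSome s o i); rw [h] at this; simpa using this

theorem occIdx_exists {s : List O} {o : O} {i : ℕ} (h : i < s.count o) :
    ∃ p, occIdx s o i = some p := by
  have := (occIdx_isSome s o i).2 h
  exact Option.isSome_iff_exists.1 this

theorem occIdx_mem {s : List O} {o : O} {i p : ℕ} (h : occIdx s o i = some p) :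
    p < s.length ∧ s[p]? = some o := by
  rw [occIdx_eq] at h
  obtain ⟨hlt, he⟩ := List.getElem?_eq_some_iff.1 h
  exact occL_mem (he ▸ List.getElem_mem hlt)

theorem occIdx_strictMono {s : List O} {o : O} {i i' p p' : ℕ}
    (h : occIdx s o i = some p) (h' : occIdx s o i' = some p') (hii : i < i') : p < p' := by
  rw [occIdx_eq] at h h'
  obtain ⟨hlt, he⟩ := List.getElem?_eq_some_iff.1 h
  obtain ⟨hlt', he'⟩ := List.getElem?_eq_some_iff.1 h'
  have := List.pairwise_iff_getElem.1 (occL_sorted s o) i i' hlt hlt' hii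
  rw [he, he'] at this
  exact this

theorem occIdx_append_left {s : List O} {o : O} {i : ℕ} (u : List O) (h : i < s.count o) :
    occIdx (s ++ u) o i = occIdx s o i := by
  rw [occIdx_eq, occIdx_eq, occL_append, List.getElem?_append]
  rw [occL_length]
  simp [h]

theorem occIdx_append_right {s : List O} {o : O} {i : ℕ} (u : List O) (h : s.count o ≤ i) :
    occIdx (s ++ u) o i = (occIdx u o (i - s.count o)).map (· + s.length) := by
  rw [occIdx_eq, occIdx_eq, occL_append,
    List.getElem?_append_right (by rw [occL_length]; exact h), List.getElem?_map, occL_length]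

theorem occIdx_cons (x : O) (s : List O) (o : O) (i : ℕ) :
    occIdx (x :: s) o i =
      if x = o then (if i = 0 then some 0 else (occIdx s o (i - 1)).map (· + 1))
      else (occIdx s o i).map (· + 1) := by
  rw [occIdx_eq, occL_cons]
  by_cases hx : x = o
  · simp only [hx, if_true]
    cases i with
    | zero => simp
    | succ n => simp [occIdx_eq]
  · simp [hx, occIdx_eq]

theorem occIdx_cons_shift {s : List O} {o : O} {i p : ℕ} (x : O)
    (h : occIdx s o i = some p) :
    occIdx (x :: s) o (i + (if x = o then 1 else 0)) = some (p + 1) := by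
  rw [occIdx_cons]
  by_cases hx : x = o <;> simp [hx, h]

theorem occIdx_cons_some {x o : O} {s : List O} {i p : ℕ}
    (h : occIdx (x :: s) o i = some p) :
    (x = o ∧ i = 0 ∧ p = 0) ∨
      (∃ p', p = p' + 1 ∧ occIdx s o (i - (if x = o then 1 else 0)) = some p' ∧
        (x = o → 1 ≤ i)) := by
  rw [occIdx_cons] at h
  by_cases hx : x = o
  · rw [if_pos hx] at h
    cases i with
    | zero => left; simp at h; exact ⟨hx, rfl, h.symm⟩
    | succ n =>
      right
      simp only [Nat.succ_ne_zero, if_false, Option.map_eq_some_iff] at h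
      obtain ⟨p', hp', hpp⟩ := h
      exact ⟨p', hpp.symm, by simpa [hx] using hp', fun _ => by omega⟩
  · rw [if_neg hx] at h
    rw [Option.map_eq_some_iff] at h
    obtain ⟨p', hp', hpp⟩ := h
    exact .inr ⟨p', hpp.symm, by simpa [hx] using hp', fun hc => absurd hc hx⟩

theorem precedes_lt_count {s : List O} {a b : O} {i j : ℕ} (h : Precedes s a i b j) :
    i < s.count a ∧ j < s.count b := by
  obtain ⟨p, q, hp, hq, _⟩ := h
  exact ⟨occIdx_lt_count hp, occIdx_lt_count hq⟩

theorem precedes_asymm {s : List O} {a b : O} {i j : ℕ}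
    (h : Precedes s a i b j) (h' : Precedes s b j a i) : False := by
  obtain ⟨p, q, hp, hq, hpq⟩ := h
  obtain ⟨p', q', hp', hq', hpq'⟩ := h'
  rw [hq] at hp'; rw [hp] at hq'
  have h1 := Option.some.inj hp'
  have h2 := Option.some.inj hq'
  omega

theorem precedes_total {s : List O} {a b : O} {i j : ℕ}
    (hne : a ≠ b ∨ i ≠ j) (hi : i < s.count a) (hj : j < s.count b) :
    Precedes s a i b j ∨ Precedes s b j a i := by
  obtain ⟨p, hp⟩ := occIdx_exists hi
  obtain ⟨q, hq⟩ := occIdx_exists hj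
  have hpq : p ≠ q := by
    intro he
    subst he
    rcases hne with hne | hne
    · have h1 := (occIdx_mem hp).2
      have h2 := (occIdx_mem hq).2
      rw [h1] at h2
      exact hne (Option.some.inj h2)
    · rcases Nat.lt_or_ge i j with h | h
      · by_cases hab : a = b
        · subst hab; exact absurd (occIdx_strictMono hp hq h) (by omega)
        · have h1 := (occIdx_mem hp).2
          have h2 := (occIdx_mem hq).2
          rw [h1] at h2
          exact hab (Option.some.inj h2)
      · have hj' : j < i := by omega
        by_cases hab : a = b
        · subst hab; exact absurd (occIdx_strictMono hq hp hj') (by omega)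
        · have h1 := (occIdx_mem hp).2
          have h2 := (occIdx_mem hq).2
          rw [h1] at h2
          exact hab (Option.some.inj h2)
  rcases Nat.lt_or_ge p q with h | h
  · exact .inl ⟨p, q, hp, hq, h⟩
  · exact .inr ⟨q, p, hq, hp, by omega⟩

theorem precedes_append_left {s : List O} (u : List O) {a b : O} {i j : ℕ}
    (hi : i < s.count a) (hj : j < s.count b) :
    Precedes (s ++ u) a i b j ↔ Precedes s a i b j := by
  unfold Precedes
  rw [occIdx_append_left u hi, occIdx_append_left u hj]

theorem precedes_append_of {s : List O} (u : List O) {a b : O} {i j : ℕ}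
    (h : Precedes s a i b j) : Precedes (s ++ u) a i b j := by
  have hc := precedes_lt_count h
  exact (precedes_append_left u hc.1 hc.2).2 h

theorem precedes_append_cross {s u : List O} {a b : O} {i j : ℕ}
    (hi : i < s.count a) (hbj : s.count b ≤ j) (hj : j < (s ++ u).count b) :
    Precedes (s ++ u) a i b j := by
  classical
  obtain ⟨p, hp⟩ := occIdx_exists hi
  have hju : j - s.count b < u.count b := by rw [List.count_append] at hj; omega
  obtain ⟨q, hq⟩ := occIdx_exists hju
  refine ⟨p, q + s.length, ?_, ?_, ?_⟩
  · rw [occIdx_append_left u hi]; exact hp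
  · rw [occIdx_append_right u hbj, hq]; rfl
  · have := (occIdx_mem hp).1
    omega

theorem not_precedes_cross {s u : List O} {a b : O} {i j : ℕ}
    (hi : s.count a ≤ i) (hj : j < s.count b) :
    ¬ Precedes (s ++ u) a i b j := by
  rintro ⟨p, q, hp, hq, hpq⟩
  rw [occIdx_append_right u hi] at hp
  rw [occIdx_append_left u hj] at hq
  obtain ⟨p', _, hpp⟩ := Option.map_eq_some_iff.1 hp
  have := (occIdx_mem hq).1
  omega

theorem precedes_cons_shift {s : List O} {a b : O} {i j : ℕ} (x : O)
    (h : Precedes s a i b j) :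
    Precedes (x :: s) a (i + (if x = a then 1 else 0)) b (j + (if x = b then 1 else 0)) := by
  obtain ⟨p, q, hp, hq, hpq⟩ := h
  exact ⟨p + 1, q + 1, occIdx_cons_shift x hp, occIdx_cons_shift x hq, by omega⟩

theorem precedes_cons_head {x : O} {s : List O} {b : O} {j q' : ℕ}
    (hq : occIdx s b (j - (if x = b then 1 else 0)) = some q') (hj : x = b → 1 ≤ j) :
    Precedes (x :: s) x 0 b j := by
  refine ⟨0, q' + 1, ?_, ?_, by omega⟩
  · rw [occIdx_cons, if_pos rfl, if_pos rfl]
  · have := occIdx_cons_shift x hq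
    have hje : j - (if x = b then 1 else 0) + (if x = b then 1 else 0) = j := by
      by_cases hxb : x = b <;> simp [hxb] at hj ⊢ <;> omega
    rwa [hje] at this

theorem precedes_cons_cases {x : O} {s : List O} {a b : O} {i j : ℕ}
    (h : Precedes (x :: s) a i b j) :
    (x = a ∧ i = 0 ∧ (x = b → 1 ≤ j) ∧
      ∃ q', occIdx s b (j - (if x = b then 1 else 0)) = some q') ∨
    ((x = a → 1 ≤ i) ∧ (x = b → 1 ≤ j) ∧
      Precedes s a (i - (if x = a then 1 else 0)) b (j - (if x = b then 1 else 0))) := by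
  obtain ⟨p, q, hp, hq, hpq⟩ := h
  rcases occIdx_cons_some hp with ⟨hxa, hi0, hp0⟩ | ⟨p', hpe, hp', hia⟩
  · rcases occIdx_cons_some hq with ⟨hxb, hj0, hq0⟩ | ⟨q', hqe, hq', hjb⟩
    · omega
    · exact .inl ⟨hxa, hi0, hjb, q', hq'⟩
  · rcases occIdx_cons_some hq with ⟨hxb, hj0, hq0⟩ | ⟨q', hqe, hq', hjb⟩
    · omega
    · exact .inr ⟨hia, hjb, p', q', hp', hq', by omega⟩

theorem occIdx_cons_self (x : O) (s : List O) : occIdx (x :: s) x 0 = some 0 := by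
  rw [occIdx_cons]; simp

section WithSigma
variable {Q : Type u} {R : Type w} (f : O → Q → R × Q)

theorem conflict_symm {a b : O} (h : Conflict f a b) : Conflict f b a := by
  obtain ⟨q, hq⟩ := h
  refine ⟨q, fun hc => hq ?_⟩
  obtain ⟨ra, rb, q1, q2, q', h1, h2, h3, h4⟩ := hc
  exact ⟨rb, ra, q2, q1, q', h3, h4, h1, h2⟩

theorem sequiv_count {s s' : List O} (h : ScheduleEquiv f s s') (o : O) :
    s.count o = s'.count o := by
  classical
  exact List.perm_iff_count.1 (Multiset.coe_eq_coe.1 h.1) o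

theorem sequiv_length {s s' : List O} (h : ScheduleEquiv f s s') :
    s.length = s'.length :=
  (Multiset.coe_eq_coe.1 h.1).length_eq

theorem sequiv_refl (s : List O) : ScheduleEquiv f s s := (scheduleSetoid f).iseqv.refl s

theorem sequiv_symm {s s' : List O} (h : ScheduleEquiv f s s') : ScheduleEquiv f s' s :=
  (scheduleSetoid f).iseqv.symm h

theorem sequiv_trans {s t u : List O} (h : ScheduleEquiv f s t) (h' : ScheduleEquiv f t u) :
    ScheduleEquiv f s u :=
  (scheduleSetoid f).iseqv.trans h h'

theorem sequiv_cons (x : O) {s s' : List O} (h : ScheduleEquiv f s s') :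
    ScheduleEquiv f (x :: s) (x :: s') := by
  have key : ∀ u v : List O, ScheduleEquiv f u v → ∀ a b i j, Conflict f a b →
      Precedes (x :: u) a i b j → Precedes (x :: v) a i b j := by
    intro u v huv a b i j hab hp
    rcases precedes_cons_cases hp with ⟨hxa, hi0, hjb, q', hq'⟩ | ⟨hia, hjb, hps⟩
    · have hcount : j - (if x = b then 1 else 0) < v.count b := by
        rw [← sequiv_count f huv b]
        exact occIdx_lt_count hq'
      obtain ⟨q'', hq''⟩ := occIdx_exists hcount
      subst hxa; subst hi0
      exact precedes_cons_head hq'' hjb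
    · have h1 := (huv.2 a b _ _ hab).1 hps
      have h2 := precedes_cons_shift x h1
      have e1 : i - (if x = a then 1 else 0) + (if x = a then 1 else 0) = i := by
        by_cases hxa : x = a <;> simp [hxa] at hia ⊢ <;> omega
      have e2 : j - (if x = b then 1 else 0) + (if x = b then 1 else 0) = j := by
        by_cases hxb : x = b <;> simp [hxb] at hjb ⊢ <;> omega
      rwa [e1, e2] at h2
  refine ⟨?_, fun a b i j hab => ⟨key s s' h a b i j hab, key s' s (sequiv_symm f h) a b i j hab⟩⟩
  rw [← Multiset.cons_coe, ← Multiset.cons_coe, h.1]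

theorem sequiv_append_right {s s' : List O} (w : List O) (h : ScheduleEquiv f s s') :
    ScheduleEquiv f (s ++ w) (s' ++ w) := by
  classical
  have hperm : (s ++ w).Perm (s' ++ w) := (Multiset.coe_eq_coe.1 h.1).append_right w
  have key : ∀ u v : List O, ScheduleEquiv f u v → ∀ a b i j, Conflict f a b →
      Precedes (u ++ w) a i b j → Precedes (v ++ w) a i b j := by
    intro u v huv a b i j hab hp
    have hcnt := precedes_lt_count hp
    rw [List.count_append, List.count_append] at hcnt
    by_cases hi : i < u.count a <;> by_cases hj : j < v.count b
    · rw [← sequiv_count f huv b] at hj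
      have := (precedes_append_left w hi hj).1 hp
      exact precedes_append_of w ((huv.2 a b i j hab).1 this)
    · have hca := sequiv_count f huv a
      have hcb := sequiv_count f huv b
      apply precedes_append_cross (show i < v.count a by omega) (show v.count b ≤ j by omega)
      rw [List.count_append]
      omega
    · have hcb := sequiv_count f huv b
      exact absurd hp (not_precedes_cross (by omega) (by omega))
    · have hca := sequiv_count f huv a
      have hcb := sequiv_count f huv b
      have hlen := sequiv_length f huv
      obtain ⟨p, q, hpp, hqq, hpq⟩ := hp
      rw [occIdx_append_right w (by omega)] at hpp
      rw [occIdx_append_right w (by omega)] at hqq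
      obtain ⟨p', hp', hpe⟩ := Option.map_eq_some_iff.1 hpp
      obtain ⟨q', hq', hqe⟩ := Option.map_eq_some_iff.1 hqq
      have hpe' : p = p' + u.length := by simpa using hpe.symm
      have hqe' : q = q' + u.length := by simpa using hqe.symm
      refine ⟨p' + v.length, q' + v.length, ?_, ?_, by omega⟩
      · rw [occIdx_append_right w (by omega), ← hca, hp']
        rfl
      · rw [occIdx_append_right w (by omega), ← hcb, hq']
        rfl
  exact ⟨Multiset.coe_eq_coe.2 hperm,
    fun a b i j hab => ⟨key s s' h a b i j hab, key s' s (sequiv_symm f h) a b i j hab⟩⟩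

theorem precedes_swap {x y : O} (hxy : x ≠ y) (hnc : ¬ Conflict f x y) (m : List O)
    {a b : O} {i j : ℕ} (hab : Conflict f a b) (hp : Precedes (x :: y :: m) a i b j) :
    Precedes (y :: x :: m) a i b j := by
  rcases precedes_cons_cases hp with ⟨hxa, hi0, hjb, q', hq'⟩ | ⟨hia, hjb, hps⟩
  · -- a = x, occurrence 0; b occurs in y :: m
    rcases occIdx_cons_some hq' with ⟨hyb, hj0, hq0⟩ | ⟨q'', hqe, hq'', hjb'⟩
    · -- b = y : conflict x y, contradiction
      rw [← hxa, ← hyb] at hab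
      exact absurd hab hnc
    · -- b occurs in m at q''
      subst hxa
      have hx1 : occIdx (y :: x :: m) x 0 = some 1 := by
        rw [occIdx_cons, if_neg (Ne.symm hxy), occIdx_cons_self]
        rfl
      have hb1 := occIdx_cons_shift x hq''
      have hb2 := occIdx_cons_shift y hb1
      refine ⟨1, q'' + 1 + 1, by rwa [hi0], ?_, by omega⟩
      have : j - (if x = b then 1 else 0) - (if y = b then 1 else 0)
          + (if x = b then 1 else 0) + (if y = b then 1 else 0) = j := by
        by_cases h1 : x = b <;> by_cases h2 : y = b <;>
          simp [h1, h2] at hjb hjb' ⊢ <;> omega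
      rwa [this] at hb2
  · rcases precedes_cons_cases hps with ⟨hya, hi0, hjb', q', hq'⟩ | ⟨hia', hjb', hps'⟩
    · -- a = y, occurrence at head of y::m
      have hxa : x ≠ a := fun h => hxy (h.trans hya.symm)
      subst hya
      have hi00 : i = 0 := by simp [if_neg hxa] at hi0 hia; omega
      have hb1 := occIdx_cons_shift x hq'
      have hb2 := occIdx_cons_shift y hb1
      refine ⟨0, q' + 1 + 1, by rw [hi00]; exact occIdx_cons_self y (x :: m), ?_, by omega⟩
      have : j - (if x = b then 1 else 0) - (if y = b then 1 else 0)
          + (if x = b then 1 else 0) + (if y = b then 1 else 0) = j := by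
        by_cases h1 : x = b <;> by_cases h2 : y = b <;>
          simp [h1, h2] at hjb hjb' ⊢ <;> omega
      rwa [this] at hb2
    · -- both occurrences in m
      have h1 := precedes_cons_shift x hps'
      have h2 := precedes_cons_shift y h1
      have ea : i - (if x = a then 1 else 0) - (if y = a then 1 else 0)
          + (if x = a then 1 else 0) + (if y = a then 1 else 0) = i := by
        by_cases hh1 : x = a <;> by_cases hh2 : y = a <;>
          simp [hh1, hh2] at hia hia' ⊢ <;> omega
      have eb : j - (if x = b then 1 else 0) - (if y = b then 1 else 0)
          + (if x = b then 1 else 0) + (if y = b then 1 else 0) = j := by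
        by_cases hh1 : x = b <;> by_cases hh2 : y = b <;>
          simp [hh1, hh2] at hjb hjb' ⊢ <;> omega
      rw [ea, eb] at h2
      -- h2 : Precedes (y :: x :: m) a i b j, but shifts applied in order x then y
      exact h2

theorem sequiv_swap {x y : O} (hxy : x ≠ y) (hnc : ¬ Conflict f x y) (m : List O) :
    ScheduleEquiv f (x :: y :: m) (y :: x :: m) := by
  refine ⟨Multiset.coe_eq_coe.2 ((List.Perm.swap x y m).symm), fun a b i j hab =>
    ⟨precedes_swap f hxy hnc m hab,
     precedes_swap f (Ne.symm hxy) (fun h => hnc (conflict_symm f h)) m hab⟩⟩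

theorem sequiv_move {x : O} {m : List O} (h : ∀ y ∈ m, y ≠ x ∧ ¬ Conflict f x y)
    (w : List O) : ScheduleEquiv f (x :: (m ++ w)) (m ++ x :: w) := by
  induction m with
  | nil => exact sequiv_refl f _
  | cons y m ih =>
    have hy := h y List.mem_cons_self
    have h1 : ScheduleEquiv f (x :: y :: (m ++ w)) (y :: x :: (m ++ w)) :=
      sequiv_swap f (Ne.symm hy.1) hy.2 _
    exact sequiv_trans f h1
      (sequiv_cons f y (ih (fun z hz => h z (List.mem_cons_of_mem y hz))))

/-- `c`-closedness: no "dropped" occurrence precedes a "kept" conflicting occurrence. -/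
def ClosedCnt (c : O → ℕ) (t : List O) : Prop :=
  ∀ a b i j, Conflict f a b → i < c a → c b ≤ j → ¬ Precedes t b j a i

theorem split_exists (c : O → ℕ) (t : List O) (hcl : ClosedCnt f c t)
    (hle : ∀ o, c o ≤ t.count o) :
    ∃ jw : List O × List O, ScheduleEquiv f t (jw.1 ++ jw.2) ∧
      ∀ o, jw.1.count o = c o := by
  classical
  induction t generalizing c with
  | nil =>
    refine ⟨([], []), sequiv_refl f [], fun o => ?_⟩
    have := hle o
    simp at this ⊢
    omega
  | cons x t ih =>
    by_cases hx : c x = 0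
    · -- drop `x`
      have hcl' : ClosedCnt f c t := by
        intro a b i j hab hi hj hp
        have hax : x ≠ a := fun h => by rw [← h] at hi; omega
        have hp2 := precedes_cons_shift x hp
        rw [if_neg hax, Nat.add_zero] at hp2
        exact hcl a b i (j + if x = b then 1 else 0) hab hi (by omega) hp2
      have hle' : ∀ o, c o ≤ t.count o := by
        intro o
        by_cases ho : x = o
        · rw [← ho, hx]; omega
        · have hco := hle o
          rw [List.count_cons] at hco
          simpa [ho] using hco
      obtain ⟨⟨j', w'⟩, hjw, hcnt⟩ := ih c hcl' hle'
      have h2 : ScheduleEquiv f (x :: (j' ++ w')) (j' ++ x :: w') := by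
        apply sequiv_move f
        intro y hy
        have hyc : 0 < j'.count y := List.count_pos_iff.2 hy
        rw [hcnt y] at hyc
        have hyx : y ≠ x := fun he => by rw [he] at hyc; omega
        refine ⟨hyx, fun hconf => ?_⟩
        have hyt : 0 < t.count y := by
          have hco := hle y
          rw [List.count_cons, if_neg (by simpa using (Ne.symm hyx))] at hco
          omega
        obtain ⟨q, hq⟩ := occIdx_exists hyt
        have hq0 : occIdx t y (0 - if x = y then 1 else 0) = some q := by
          rw [if_neg (Ne.symm hyx)]; exact hq
        have hPrec : Precedes (x :: t) x 0 y 0 :=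
          precedes_cons_head hq0 (fun he => absurd he (Ne.symm hyx))
        exact hcl y x 0 0 (conflict_symm f hconf) (by omega) (by omega) hPrec
      exact ⟨(j', x :: w'), sequiv_trans f (sequiv_cons f x hjw) h2, hcnt⟩
    · -- keep `x`
      set c' : O → ℕ := fun o => if o = x then c x - 1 else c o with hc'
      have hc'x : c' x = c x - 1 := if_pos rfl
      have hc'o : ∀ o, o ≠ x → c' o = c o := fun o ho => if_neg ho
      have hcl' : ClosedCnt f c' t := by
        intro a b i j hab hi hj hp
        have hp2 := precedes_cons_shift x hp
        apply hcl a b (i + if x = a then 1 else 0) (j + if x = b then 1 else 0) hab ?_ ?_ hp2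
        · by_cases hxa : x = a
          · subst hxa
            rw [hc'x] at hi
            rw [if_pos rfl]
            omega
          · rw [hc'o a (fun h => hxa h.symm)] at hi
            rw [if_neg hxa]
            omega
        · by_cases hxb : x = b
          · subst hxb
            rw [hc'x] at hj
            rw [if_pos rfl]
            omega
          · rw [hc'o b (fun h => hxb h.symm)] at hj
            rw [if_neg hxb]
            omega
      have hle' : ∀ o, c' o ≤ t.count o := by
        intro o
        have hco := hle o
        rw [List.count_cons] at hco
        by_cases ho : o = x
        · subst ho
          rw [hc'x]
          simp at hco
          omega
        · rw [hc'o o ho]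
          rw [if_neg (by simpa using (fun h : x = o => ho h.symm))] at hco
          omega
      obtain ⟨⟨j', w'⟩, hjw, hcnt⟩ := ih c' hcl' hle'
      refine ⟨(x :: j', w'), sequiv_cons f x hjw, fun o => ?_⟩
      have hco := hcnt o
      rw [List.count_cons]
      by_cases ho : o = x
      · rw [ho] at hco ⊢
        rw [hc'x] at hco
        rw [if_pos (by simp : (x == x) = true), hco]
        omega
      · rw [hc'o o ho] at hco
        rw [if_neg (by simpa using (fun h : x = o => ho h.symm)), hco]
        omega

theorem closed_of_prefix {s u t : List O} (h : ScheduleEquiv f (s ++ u) t)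
    {a b : O} {i j : ℕ} (hab : Conflict f a b) (hi : i < s.count a)
    (hj : s.count b ≤ j) : ¬ Precedes t b j a i := fun hp =>
  not_precedes_cross hj hi ((h.2 b a j i (conflict_symm f hab)).2 hp)

theorem sequiv_of_prefixes {s u s' u' t : List O}
    (h1 : ScheduleEquiv f (s ++ u) t) (h2 : ScheduleEquiv f (s' ++ u') t)
    (hc : ∀ o, s.count o = s'.count o) : ScheduleEquiv f s s' := by
  classical
  refine ⟨Multiset.coe_eq_coe.2 (List.perm_iff_count.2 hc), fun a b i j hab => ?_⟩
  by_cases hi : i < s.count a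
  · by_cases hj : j < s.count b
    · rw [← precedes_append_left u hi hj, h1.2 a b i j hab, ← h2.2 a b i j hab,
        precedes_append_left u' (by rw [← hc]; exact hi) (by rw [← hc]; exact hj)]
    · constructor
      · intro hp; exact absurd (precedes_lt_count hp).2 hj
      · intro hp; exact absurd (precedes_lt_count hp).2 (by have := hc b; omega)
  · constructor
    · intro hp; exact absurd (precedes_lt_count hp).1 hi
    · intro hp; exact absurd (precedes_lt_count hp).1 (by have := hc a; omega)

theorem glb_step {s1 s2 t u1 u2 : List O}
    (h1 : ScheduleEquiv f (s1 ++ u1) t) (h2 : ScheduleEquiv f (s2 ++ u2) t) :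
    ∃ j w : List O, ScheduleEquiv f t (j ++ w) ∧
      ∀ o, j.count o = max (s1.count o) (s2.count o) := by
  classical
  set c : O → ℕ := fun o => max (s1.count o) (s2.count o) with hc
  have hcl : ClosedCnt f c t := by
    intro a b i j hab hi hj hp
    rcases Nat.lt_or_ge i (s1.count a) with h | h
    · exact closed_of_prefix f h1 hab h (le_trans (le_max_left _ _) hj) hp
    · have hi2 : i < s2.count a := by
        have : c a = max (s1.count a) (s2.count a) := rfl
        omega
      exact closed_of_prefix f h2 hab hi2 (le_trans (le_max_right _ _) hj) hp
  have hle : ∀ o, c o ≤ t.count o := by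
    intro o
    have e1 := sequiv_count f h1 o
    have e2 := sequiv_count f h2 o
    rw [List.count_append] at e1 e2
    have : c o = max (s1.count o) (s2.count o) := rfl
    omega
  obtain ⟨⟨j, w⟩, hjw, hcnt⟩ := split_exists f c t hcl hle
  exact ⟨j, w, hjw, hcnt⟩

theorem join_unique {s1 s2 t t' u1 u2 u1' u2' j w j' w' : List O}
    (h1 : ScheduleEquiv f (s1 ++ u1) t) (h2 : ScheduleEquiv f (s2 ++ u2) t)
    (h1' : ScheduleEquiv f (s1 ++ u1') t') (h2' : ScheduleEquiv f (s2 ++ u2') t')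
    (hjw : ScheduleEquiv f t (j ++ w))
    (hc : ∀ o, j.count o = max (s1.count o) (s2.count o))
    (hjw' : ScheduleEquiv f t' (j' ++ w'))
    (hc' : ∀ o, j'.count o = max (s1.count o) (s2.count o)) :
    ScheduleEquiv f j j' := by
  classical
  refine ⟨Multiset.coe_eq_coe.2 (List.perm_iff_count.2 (fun o => (hc o).trans (hc' o).symm)),
    fun a b i k hab => ?_⟩
  by_cases hi : i < max (s1.count a) (s2.count a)
  · by_cases hk : k < max (s1.count b) (s2.count b)
    · -- both occurrences exist in the joins
      have hij : i < j.count a := by rw [hc]; exact hi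
      have hkj : k < j.count b := by rw [hc]; exact hk
      have hij' : i < j'.count a := by rw [hc']; exact hi
      have hkj' : k < j'.count b := by rw [hc']; exact hk
      have e1 : Precedes j a i b k ↔ Precedes t a i b k := by
        rw [← precedes_append_left w hij hkj]
        exact ((hjw.2 a b i k hab).symm)
      have e2 : Precedes j' a i b k ↔ Precedes t' a i b k := by
        rw [← precedes_append_left w' hij' hkj']
        exact ((hjw'.2 a b i k hab).symm)
      rw [e1, e2]
      -- now compare t and t'
      by_cases hA : i < s1.count a ∧ k < s1.count b
      · rw [← h1.2 a b i k hab, ← h1'.2 a b i k hab,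
          precedes_append_left u1 hA.1 hA.2, precedes_append_left u1' hA.1 hA.2]
      · by_cases hB : i < s2.count a ∧ k < s2.count b
        · rw [← h2.2 a b i k hab, ← h2'.2 a b i k hab,
            precedes_append_left u2 hB.1 hB.2, precedes_append_left u2' hB.1 hB.2]
        · exfalso
          have hta := sequiv_count f h1 a
          have htb := sequiv_count f h1 b
          have hta2 := sequiv_count f h2 a
          have htb2 := sequiv_count f h2 b
          rw [List.count_append] at hta htb hta2 htb2
          rcases Nat.lt_or_ge i (s1.count a) with hcase | hcase
          · -- i in s1, so k ∉ s1, k ∈ s2, i ∉ s2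
            have hk1 : s1.count b ≤ k := by omega
            have hk2 : k < s2.count b := by omega
            have hi2 : s2.count a ≤ i := by omega
            have hp1 : Precedes t a i b k :=
              (h1.2 a b i k hab).1 (precedes_append_cross hcase hk1
                (by rw [List.count_append]; omega))
            have hp2 : Precedes t b k a i :=
              (h2.2 b a k i (conflict_symm f hab)).1 (precedes_append_cross hk2 hi2
                (by rw [List.count_append]; omega))
            exact precedes_asymm hp1 hp2
          · have hi2 : i < s2.count a := by omega
            have hk2 : s2.count b ≤ k := by omega
            have hk1 : k < s1.count b := by omega
            have hp1 : Precedes t a i b k :=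
              (h2.2 a b i k hab).1 (precedes_append_cross hi2 hk2
                (by rw [List.count_append]; omega))
            have hp2 : Precedes t b k a i :=
              (h1.2 b a k i (conflict_symm f hab)).1 (precedes_append_cross hk1 hcase
                (by rw [List.count_append]; omega))
            exact precedes_asymm hp1 hp2
    · constructor
      · intro hp; exact absurd (precedes_lt_count hp).2 (by rw [hc]; exact hk)
      · intro hp; exact absurd (precedes_lt_count hp).2 (by rw [hc']; exact hk)
  · constructor
    · intro hp; exact absurd (precedes_lt_count hp).1 (by rw [hc]; exact hi)
    · intro hp; exact absurd (precedes_lt_count hp).1 (by rw [hc']; exact hi)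

theorem pref_le_join {s u t j w : List O}
    (hst : ScheduleEquiv f (s ++ u) t) (hjw : ScheduleEquiv f t (j ++ w))
    (hcnt : ∀ o, s.count o ≤ j.count o) :
    ∃ v, ScheduleEquiv f j (s ++ v) := by
  classical
  have hcl : ClosedCnt f (fun o => s.count o) j := by
    intro a b i k hab hi hk hp
    have hp2 : Precedes t b k a i :=
      (hjw.2 b a k i (conflict_symm f hab)).2 (precedes_append_of w hp)
    exact closed_of_prefix f hst hab hi hk hp2
  obtain ⟨⟨j2, w2⟩, hj2, hcnt2⟩ := split_exists f _ j hcl hcnt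
  -- j2 is a prefix of t with the same counts as s
  have hj2t : ScheduleEquiv f (j2 ++ (w2 ++ w)) t := by
    have := sequiv_append_right f w hj2
    rw [List.append_assoc] at this
    exact sequiv_symm f (sequiv_trans f hjw this)
  have hsj2 : ScheduleEquiv f s j2 :=
    sequiv_of_prefixes f hst hj2t (fun o => (hcnt2 o).symm)
  exact ⟨w2, sequiv_trans f hj2 (sequiv_append_right f w2 (sequiv_symm f hsj2))⟩

theorem trace_sound {s s' : List O} (h : ScheduleEquiv f s s') :
    Quotient.mk (scheduleSetoid f) s = Quotient.mk (scheduleSetoid f) s' := Quot.sound h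

theorem trace_exact {s s' : List O}
    (h : Quotient.mk (scheduleSetoid f) s = Quotient.mk (scheduleSetoid f) s') :
    ScheduleEquiv f s s' := Quotient.exact h

theorem traceLe_mk_iff {s1 : List O} {x : Trace f} :
    TraceLe f (Quotient.mk (scheduleSetoid f) s1) x ↔
      ∃ u, x = Quotient.mk (scheduleSetoid f) (s1 ++ u) := by
  constructor
  · rintro ⟨s, u, hs, hx⟩
    refine ⟨u, hx.trans (trace_sound f ?_)⟩
    exact sequiv_append_right f u (sequiv_symm f (trace_exact f hs))
  · rintro ⟨u, hx⟩
    exact ⟨s1, u, rfl, hx⟩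

end WithSigma

end Groundwork

/-- every nonempty set of traces admits a greatest lower bound
under the prefix order. -/
theorem trace_glb_exists
    {Q : Type u} {O : Type v} {R : Type w} (σ : O → Q → R × Q)
    (S : Set (Trace σ)) (hS : S.Nonempty) :
    ∃ g : Trace σ, (∀ x ∈ S, TraceLe σ g x) ∧
      ∀ l : Trace σ, (∀ x ∈ S, TraceLe σ l x) → TraceLe σ l g := by
  classical
  obtain ⟨x0, hx0S⟩ := hS
  set mkq : List O → Trace σ := Quotient.mk (scheduleSetoid σ) with hmkq
  have hrep : ∀ x : Trace σ, ∃ t : List O, mkq t = x := fun x => Quot.exists_rep x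
  let tl : Trace σ → ℕ := Quotient.lift List.length (fun a b h => sequiv_length σ h)
  have tld : ∀ s : List O, tl (mkq s) = s.length := fun s => rfl
  set LB : Set (Trace σ) := {p | ∀ x ∈ S, TraceLe σ p x} with hLBdef
  have hLBe : mkq [] ∈ LB := by
    intro x hx
    obtain ⟨t, ht⟩ := hrep x
    exact ⟨[], t, rfl, ht.symm⟩
  set N : Set ℕ := tl '' LB with hN
  have hNne : N.Nonempty := ⟨tl (mkq []), ⟨_, hLBe, rfl⟩⟩
  have hNbdd : BddAbove N := by
    obtain ⟨t0', ht0'⟩ := hrep x0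
    refine ⟨t0'.length, ?_⟩
    rintro n ⟨p, hp, rfl⟩
    obtain ⟨s, u, hps, hxu⟩ := hp x0 hx0S
    have h2 : (s ++ u).length = t0'.length :=
      sequiv_length σ (trace_exact σ (hxu.symm.trans ht0'.symm))
    rw [hps, tld]
    rw [List.length_append] at h2
    omega
  obtain ⟨m, ⟨g, hgLB, hgl⟩, hmax⟩ : ∃ m, (∃ g ∈ LB, tl g = m) ∧ ∀ n ∈ N, n ≤ m := by
    obtain ⟨g, hg, hgl⟩ := Nat.sSup_mem hNne hNbdd
    exact ⟨sSup N, ⟨g, hg, hgl⟩, fun n hn => le_csSup hNbdd hn⟩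
  refine ⟨g, hgLB, ?_⟩
  intro l hl
  obtain ⟨s1, hs1⟩ := hrep l
  obtain ⟨s2, hs2⟩ := hrep g
  have hpre : ∀ x ∈ S, ∃ t u1 u2 : List O, x = mkq t ∧
      ScheduleEquiv σ (s1 ++ u1) t ∧ ScheduleEquiv σ (s2 ++ u2) t := by
    intro x hx
    have hlx := hl x hx
    have hgx := hgLB x hx
    rw [← hs1] at hlx
    rw [← hs2] at hgx
    obtain ⟨u1, hu1⟩ := (traceLe_mk_iff σ).1 hlx
    obtain ⟨u2, hu2⟩ := (traceLe_mk_iff σ).1 hgx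
    exact ⟨s1 ++ u1, u1, u2, hu1, sequiv_refl σ _, trace_exact σ (hu2.symm.trans hu1)⟩
  obtain ⟨t0', u1, u2, hx0eq, h1, h2⟩ := hpre x0 hx0S
  obtain ⟨j, w, hjw, hjc⟩ := glb_step σ h1 h2
  have hjLB : mkq j ∈ LB := by
    intro x hx
    obtain ⟨t, v1, v2, hxeq, h1', h2'⟩ := hpre x hx
    obtain ⟨j', w', hjw', hjc'⟩ := glb_step σ h1' h2'
    have hjj := join_unique σ h1 h2 h1' h2' hjw hjc hjw' hjc'
    refine ⟨j, w', rfl, ?_⟩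
    rw [hxeq]
    apply trace_sound σ
    exact sequiv_trans σ hjw' (sequiv_symm σ (sequiv_append_right σ w' hjj))
  obtain ⟨v2, hv2⟩ := pref_le_join σ h2 hjw (fun o => by rw [hjc o]; exact le_max_right _ _)
  obtain ⟨v1, hv1⟩ := pref_le_join σ h1 hjw (fun o => by rw [hjc o]; exact le_max_left _ _)
  have hjN : tl (mkq j) ∈ N := ⟨_, hjLB, rfl⟩
  have hle1 : tl (mkq j) ≤ m := hmax _ hjN
  rw [tld] at hle1
  have hg2 : tl g = s2.length := by rw [← hs2, tld]
  have hlen2 := sequiv_length σ hv2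
  rw [List.length_append] at hlen2
  have hv2nil : v2 = [] := List.length_eq_zero_iff.1 (by omega)
  rw [hv2nil, List.append_nil] at hv2
  have hjg : mkq j = g := by rw [← hs2]; exact trace_sound σ hv2
  refine ⟨s1, v1, hs1.symm, ?_⟩
  rw [← hjg]
  exact trace_sound σ hv1
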